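/- arXiv:2106.15455 — 2 statements merged into one kernel-verified Lean document; each statement's English description precedes it below -/
import Mathlib

section
/- For all natural numbers N ≥ 2 and all natural numbers m, q with 0 ≤ m ≤ N − 2 and 0 ≤ q ≤ N − 2, the Shmaliy polynomials are orthogonal with respect to the weight ρ(n,N) = 2n/(N(N−1)): one has ∑_{n=0}^{N−1} (2n/(N(N−1))) h_m(n,N) h_q(n,N) = δ_{mq} · (m+1)Γ(N−1)Γ(N)/(Γ(N−m−1) · N · Γ(N+m+1)), where δ_{mq} is the Kronecker delta. -/
/-- The Pochhammer symbol `(a)_k = a (a+1) ⋯ (a+k-1)` over ℝ. -/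
noncomputable def poch (a : ℝ) (k : ℕ) : ℝ := (ascPochhammer ℝ k).eval a

/-- The Shmaliy polynomial `h_m(n,N)`. -/
noncomputable def shmaliy (m n N : ℕ) : ℝ :=
  (((m : ℝ) + 1) ^ 2 / N) *
    ∑ k ∈ Finset.range (m + 1),
      (poch (-(m : ℝ)) k * poch ((n : ℝ) + 1) k * poch ((m : ℝ) + 2) k) /
        (poch 2 k * poch ((N : ℝ) + 1) k * (k.factorial : ℝ))

/-!
Multiplication by `n` acts on the basis `(n+1)_k` as a shift,
`n (n+1)_k = (n+1)_{k+1} - (k+1) (n+1)_k`, and comparing coefficients in this basis gives the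
three-term recurrence `n h_m = A_m h_{m+1} + B_m h_m + C_m h_{m-1}`. Since multiplication by `n`
is symmetric for the weighted sum, the Gram matrix `G m q = ∑ ρ h_m h_q` satisfies
`A_m G (m+1) q + B_m G m q + C_m G (m-1) q = A_q G m (q+1) + B_q G m q + C_q G m (q-1)`.
As `A_m ≠ 0`, this determines `G` row by row from its first row `G 0 q = δ_{0q} / N²`, which
comes from `∑ ρ h_q = δ_{0q} / N`, a Chu–Vandermonde sum. The diagonal matrix with entries
`φ_m = (m+1) Γ(N-1) Γ(N) / (Γ(N-m-1) N Γ(N+m+1))` has the same first row and satisfies the same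
recurrence, because `A_m φ_{m+1} = C_{m+1} φ_m`.
-/

open Finset Polynomial

lemma poch_zero (a : ℝ) : poch a 0 = 1 := by simp [poch]

lemma poch_succ (a : ℝ) (k : ℕ) : poch a (k + 1) = poch a k * (a + k) :=
  ascPochhammer_succ_eval k a

lemma poch_succ_left (a : ℝ) (k : ℕ) : poch a (k + 1) = a * poch (a + 1) k := by
  simp [poch, ascPochhammer_succ_left, Polynomial.eval_comp]

lemma poch_add (a : ℝ) (m n : ℕ) : poch a (m + n) = poch a m * poch (a + m) n := by
  simp [poch, ← ascPochhammer_mul, Polynomial.eval_comp, add_comm a]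

lemma poch_pos {a : ℝ} (ha : 0 < a) (k : ℕ) : 0 < poch a k := ascPochhammer_pos k a ha

lemma poch_neg_natCast_div_factorial (q k : ℕ) :
    poch (-(q : ℝ)) k / k.factorial = (-1) ^ k * q.choose k := by
  rw [poch, ascPochhammer_eval_neg_eq_descPochhammer, mul_div_assoc,
    ← Nat.cast_choose_eq_descPochhammer_div]

theorem Polynomial.sum_range_neg_one_pow_mul_choose_mul_eval {R : Type*} [CommRing R]
    {p : R[X]} {q : ℕ} (hp : p.natDegree < q) :
    ∑ k ∈ range (q + 1), (-1) ^ k * q.choose k * p.eval (k : R) = 0 := by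
  have h := fwdDiff_iter_eq_sum_shift 1 p.eval q 0
  rw [fwdDiff_iter_eq_zero_of_degree_lt hp, Pi.zero_apply] at h
  calc ∑ k ∈ range (q + 1), (-1) ^ k * q.choose k * p.eval (k : R)
      = (-1) ^ q * ∑ k ∈ range (q + 1),
          ((-1 : ℤ) ^ (q - k) * q.choose k) • p.eval (0 + k • 1) := by
        rw [mul_sum]
        refine sum_congr rfl fun k hk => ?_
        have hsign : (-1 : R) ^ q * (-1) ^ (q - k) = (-1) ^ k := by
          rw [← pow_add, show q + (q - k) = 2 * (q - k) + k by simp at hk; omega, pow_add,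
            pow_mul]
          simp
        rw [zsmul_eq_mul, zero_add, nsmul_one, ← hsign]
        push_cast
        ring
    _ = 0 := by rw [← h, mul_zero]

lemma poch_natCast_add_two_mul_poch_three (q k : ℕ) (hq : q ≠ 0) :
    poch ((q : ℝ) + 2) k * poch 3 (q - 1) = poch 3 k * poch ((k : ℝ) + 3) (q - 1) := by
  have h1 := poch_add 3 (q - 1) k
  have h2 := poch_add 3 k (q - 1)
  have h3 : (3 : ℝ) + ((q - 1 : ℕ) : ℝ) = q + 2 := by
    rw [Nat.cast_sub (by omega)]; push_cast; ring
  rw [h3, add_comm (q - 1) k] at h1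
  rw [add_comm (3 : ℝ)] at h2
  linear_combination h2 - h1

-- Chu–Vandermonde for `₂F₁(-q, q + 2; 3; 1)`: the summand is `(-1)^k C(q, k)` times a
-- polynomial of degree `q - 1` in `k`, so the sum is a `q`-th finite difference of it.
lemma sum_poch_neg_mul_poch_div_eq_zero {q : ℕ} (hq : q ≠ 0) :
    ∑ k ∈ range (q + 1), poch (-(q : ℝ)) k * poch ((q : ℝ) + 2) k /
      (poch 3 k * k.factorial) = 0 := by
  set P : ℝ[X] := (ascPochhammer ℝ (q - 1)).comp (X + C 3)
  have hP : P.natDegree < q := by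
    rw [natDegree_comp, ascPochhammer_natDegree, natDegree_X_add_C]; omega
  have h3 : ∀ k, poch 3 k ≠ 0 := fun k => (poch_pos (by norm_num) k).ne'
  have hterm : ∀ k ∈ range (q + 1), poch (-(q : ℝ)) k * poch ((q : ℝ) + 2) k /
      (poch 3 k * k.factorial) =
        (poch 3 (q - 1))⁻¹ * ((-1) ^ k * q.choose k * P.eval (k : ℝ)) := by
    intro k _
    have hPk : P.eval (k : ℝ) = poch ((k : ℝ) + 3) (q - 1) := by simp [P, poch, eval_comp]
    rw [hPk, ← poch_neg_natCast_div_factorial]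
    field_simp [h3]
    linear_combination poch (-(q : ℝ)) k * poch_natCast_add_two_mul_poch_three q k hq
  rw [sum_congr rfl hterm, ← mul_sum, sum_range_neg_one_pow_mul_choose_mul_eval hP, mul_zero]

lemma sum_range_natCast_mul_poch (N k : ℕ) :
    ∑ n ∈ range N, (n : ℝ) * poch ((n : ℝ) + 1) k =
      poch ((N : ℝ) - 1) (k + 2) / (k + 2) := by
  induction N with
  | zero =>
    have h := ascPochhammer_eval_neg_coe_nat_of_lt (R := ℝ) (show 1 < k + 2 by omega)
    rw [Nat.cast_one] at h
    rw [sum_range_zero, Nat.cast_zero, zero_sub, poch, h, zero_div]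
  | succ N ih =>
    rw [sum_range_succ, ih, ← poch_succ_left, poch_succ_left, poch_succ _ (k + 1)]
    push_cast
    rw [sub_add_cancel, add_sub_cancel_right]
    field_simp
    ring

-- The coefficient of `(n+1)_k` in `h_m`, with `m` relaxed to a real parameter `x` so that the
-- neighbours `x ± 1` in the recurrence need no case split; it vanishes identically at `x = -1`.
noncomputable def shmaliyCoeff (N : ℕ) (x : ℝ) (k : ℕ) : ℝ :=
  (x + 1) ^ 2 / N *
    (poch (-x) k * poch (x + 2) k / (poch 2 k * poch ((N : ℝ) + 1) k * k.factorial))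

lemma shmaliyCoeff_eq_zero_of_lt (N : ℕ) {m k : ℕ} (h : m < k) : shmaliyCoeff N m k = 0 := by
  simp [shmaliyCoeff, poch, ascPochhammer_eval_neg_coe_nat_of_lt h]

lemma shmaliy_eq_sum_coeff {m s : ℕ} (n N : ℕ) (hs : m ≤ s) :
    shmaliy m n N = ∑ k ∈ range (s + 1), shmaliyCoeff N m k * poch ((n : ℝ) + 1) k := by
  rw [← sum_subset (range_subset_range.2 (by omega : m + 1 ≤ s + 1)) fun k _ hk => by
    rw [shmaliyCoeff_eq_zero_of_lt N (by simpa using hk), zero_mul], shmaliy, mul_sum]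
  exact sum_congr rfl fun k _ => by rw [shmaliyCoeff]; ring

lemma shmaliy_zero (n N : ℕ) : shmaliy 0 n N = 1 / N := by simp [shmaliy, poch_zero]

noncomputable def shmaliyWeight (N n : ℕ) : ℝ := 2 * (n : ℝ) / ((N : ℝ) * ((N : ℝ) - 1))

lemma shmaliyCoeff_mul_poch_sub_one_div {N : ℕ} (hN : N ≠ 0) (q k : ℕ) :
    shmaliyCoeff N q k * (poch ((N : ℝ) - 1) (k + 2) / (k + 2)) =
      ((q : ℝ) + 1) ^ 2 * ((N : ℝ) - 1) / 2 *
        (poch (-(q : ℝ)) k * poch ((q : ℝ) + 2) k / (poch 3 k * k.factorial)) := by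
  have h2 : poch 2 (k + 1) = poch 2 k * (2 + k) := poch_succ 2 k
  rw [poch_succ_left 2, show (2 : ℝ) + 1 = 3 by norm_num] at h2
  have hN1 : poch ((N : ℝ) - 1) (k + 2) = ((N : ℝ) - 1) * (N * poch ((N : ℝ) + 1) k) := by
    rw [poch_succ_left, poch_succ_left]; ring_nf
  have := poch_pos (show (0 : ℝ) < 2 by norm_num) k
  have := poch_pos (show (0 : ℝ) < N + 1 by positivity) k
  have := poch_pos (show (0 : ℝ) < 3 by norm_num) k
  rw [shmaliyCoeff, hN1]
  field_simp
  linear_combination poch (-(q : ℝ)) k * poch ((q : ℝ) + 2) k * ((N : ℝ) - 1) * h2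

lemma sum_shmaliyWeight_mul_shmaliy {N : ℕ} (hN : 2 ≤ N) (q : ℕ) :
    ∑ n ∈ range N, shmaliyWeight N n * shmaliy q n N = if q = 0 then 1 / (N : ℝ) else 0 := by
  have hN' : (2 : ℝ) ≤ N := by exact_mod_cast hN
  calc ∑ n ∈ range N, shmaliyWeight N n * shmaliy q n N
      = 2 / (N * (N - 1)) * ∑ k ∈ range (q + 1),
          shmaliyCoeff N q k * ∑ n ∈ range N, (n : ℝ) * poch ((n : ℝ) + 1) k := by
        simp only [shmaliy_eq_sum_coeff _ N le_rfl, mul_sum]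
        rw [sum_comm]
        refine sum_congr rfl fun k _ => sum_congr rfl fun n _ => ?_
        rw [shmaliyWeight]; ring
    _ = ((q : ℝ) + 1) ^ 2 / N * ∑ k ∈ range (q + 1),
          poch (-(q : ℝ)) k * poch ((q : ℝ) + 2) k / (poch 3 k * k.factorial) := by
        simp only [sum_range_natCast_mul_poch,
          shmaliyCoeff_mul_poch_sub_one_div (by omega : N ≠ 0) q, ← mul_sum]
        have : (N : ℝ) - 1 ≠ 0 := by linarith
        field_simp
    _ = if q = 0 then 1 / (N : ℝ) else 0 := by
        rcases eq_or_ne q 0 with rfl | hq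
        · simp [poch_zero]
        · rw [sum_poch_neg_mul_poch_div_eq_zero hq, mul_zero, if_neg hq]

noncomputable def shmaliyA (N m : ℕ) : ℝ :=
  -(((m : ℝ) + 1) * ((N : ℝ) + m + 1)) / (2 * (2 * (m : ℝ) + 3))

noncomputable def shmaliyB (N m : ℕ) : ℝ :=
  ((m : ℝ) + 1) * ((N : ℝ) + m + 1) / (2 * (2 * (m : ℝ) + 3)) +
    ((m : ℝ) + 1) * ((N : ℝ) - m - 1) / (2 * (2 * (m : ℝ) + 1))

-- `C_0 = 0` encodes `h_{-1} = 0`; in `ℕ` the index `0 - 1` is `0`.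
noncomputable def shmaliyC (N m : ℕ) : ℝ :=
  if m = 0 then 0 else -(((m : ℝ) + 1) * ((N : ℝ) - m - 1)) / (2 * (2 * (m : ℝ) + 1))

lemma shmaliyA_ne_zero (N m : ℕ) : shmaliyA N m ≠ 0 := by
  rw [shmaliyA, neg_div]
  exact neg_ne_zero.2 (by positivity)

lemma shmaliyC_mul_shmaliyCoeff_pred (N m k : ℕ) :
    shmaliyC N m * shmaliyCoeff N ((m - 1 : ℕ) : ℝ) k =
      -(((m : ℝ) + 1) * ((N : ℝ) - m - 1)) / (2 * (2 * (m : ℝ) + 1)) *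
        shmaliyCoeff N ((m : ℝ) - 1) k := by
  rcases m with _ | m
  · simp [shmaliyC, shmaliyCoeff]
  · simp [shmaliyC]

lemma shmaliyCoeff_rec_zero (N m : ℕ) :
    -shmaliyCoeff N m 0 = shmaliyA N m * shmaliyCoeff N ((m : ℝ) + 1) 0 +
      shmaliyB N m * shmaliyCoeff N m 0 +
      shmaliyC N m * shmaliyCoeff N ((m - 1 : ℕ) : ℝ) 0 := by
  rw [shmaliyC_mul_shmaliyCoeff_pred]
  simp only [shmaliyCoeff, shmaliyA, shmaliyB, poch_zero]
  field_simp
  ring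

-- Each coefficient entering the recurrence at index `j + 1` is this factor times a polynomial.
noncomputable def shmaliyScale (N : ℕ) (x : ℝ) (j : ℕ) : ℝ :=
  poch (-x) j * poch (x + 2) j /
    (N * (poch 2 (j + 1) * poch ((N : ℝ) + 1) (j + 1) * ((j + 1).factorial : ℝ)))

lemma shmaliyCoeff_eq_scale (N : ℕ) (x : ℝ) (j : ℕ) :
    shmaliyCoeff N x j =
      shmaliyScale N x j * ((x + 1) ^ 2 * (j + 2) * (N + 1 + j) * (j + 1)) := by
  have := poch_pos (show (0 : ℝ) < 2 by norm_num) j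
  have := poch_pos (show (0 : ℝ) < N + 1 by positivity) j
  simp only [shmaliyCoeff, shmaliyScale, poch_succ, Nat.factorial_succ]
  push_cast
  field_simp
  ring

lemma shmaliyCoeff_succ_eq_scale (N : ℕ) (x : ℝ) (j : ℕ) :
    shmaliyCoeff N x (j + 1) = shmaliyScale N x j * ((x + 1) ^ 2 * (j - x) * (x + 2 + j)) := by
  rw [shmaliyCoeff, shmaliyScale, poch_succ (-x), poch_succ (x + 2)]
  ring

lemma shmaliyCoeff_add_one_succ_eq_scale (N : ℕ) (x : ℝ) (j : ℕ) :
    shmaliyCoeff N (x + 1) (j + 1) =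
      shmaliyScale N x j * (-(x + 1) * (x + 2) * (x + 2 + j) * (x + 3 + j)) := by
  have h1 : poch (-(x + 1)) (j + 1) = -(x + 1) * poch (-x) j := by
    rw [poch_succ_left, show -(x + 1) + 1 = -x by ring]
  have h2 : (x + 2) * poch (x + 1 + 2) (j + 1) = poch (x + 2) j * (x + 2 + j) * (x + 3 + j) := by
    rw [← show x + 2 + 1 = x + 1 + 2 by ring, ← poch_succ_left, poch_succ, poch_succ]
    push_cast
    ring
  rw [shmaliyCoeff, shmaliyScale, h1]
  linear_combination (-(x + 1) * poch (-x) j * (x + 2) /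
    (N * (poch 2 (j + 1) * poch ((N : ℝ) + 1) (j + 1) * ((j + 1).factorial : ℝ)))) * h2

lemma shmaliyCoeff_sub_one_succ_eq_scale (N : ℕ) (x : ℝ) (j : ℕ) :
    shmaliyCoeff N (x - 1) (j + 1) =
      shmaliyScale N x j * (-x * (x + 1) * (j - x) * (j + 1 - x)) := by
  have h1 : x * poch (-(x - 1)) (j + 1) = -(poch (-x) j * (j - x) * (j + 1 - x)) := by
    have := poch_succ_left (-x) (j + 1)
    rw [poch_succ, poch_succ, show -x + 1 = -(x - 1) by ring] at this
    push_cast at this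
    linear_combination this
  have h2 : poch (x - 1 + 2) (j + 1) = (x + 1) * poch (x + 2) j := by
    rw [poch_succ_left, show x - 1 + 2 + 1 = x + 2 by ring]
    ring
  rw [shmaliyCoeff, shmaliyScale, h2]
  linear_combination (x * (x + 1) * poch (x + 2) j /
    (N * (poch 2 (j + 1) * poch ((N : ℝ) + 1) (j + 1) * ((j + 1).factorial : ℝ)))) * h1

lemma shmaliyCoeff_rec_succ (N m j : ℕ) :
    shmaliyCoeff N m j - ((j : ℝ) + 2) * shmaliyCoeff N m (j + 1) =
      shmaliyA N m * shmaliyCoeff N ((m : ℝ) + 1) (j + 1) +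
      shmaliyB N m * shmaliyCoeff N m (j + 1) +
      shmaliyC N m * shmaliyCoeff N ((m - 1 : ℕ) : ℝ) (j + 1) := by
  have key : ((m : ℝ) + 1) ^ 2 * (j + 2) * (N + 1 + j) * (j + 1) -
        (j + 2) * ((m + 1) ^ 2 * (j - m) * (m + 2 + j)) =
      shmaliyA N m * (-(m + 1) * (m + 2) * (m + 2 + j) * (m + 3 + j)) +
      shmaliyB N m * ((m + 1) ^ 2 * (j - m) * (m + 2 + j)) +
      -((m + 1) * (N - m - 1)) / (2 * (2 * m + 1)) * (-m * (m + 1) * (j - m) * (j + 1 - m)) := by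
    simp only [shmaliyA, shmaliyB]
    field_simp
    ring
  rw [shmaliyC_mul_shmaliyCoeff_pred, shmaliyCoeff_eq_scale, shmaliyCoeff_succ_eq_scale,
    shmaliyCoeff_add_one_succ_eq_scale, shmaliyCoeff_sub_one_succ_eq_scale]
  linear_combination shmaliyScale N m j * key

lemma mul_sum_mul_poch_add_one (x : ℝ) (c : ℕ → ℝ) {s : ℕ} (hc : c s = 0) :
    x * ∑ k ∈ range (s + 1), c k * poch (x + 1) k =
      ∑ j ∈ range s, (c j - ((j : ℝ) + 2) * c (j + 1)) * poch (x + 1) (j + 1) - c 0 := by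
  have hx : ∀ k : ℕ,
      x * poch (x + 1) k = poch (x + 1) (k + 1) - ((k : ℝ) + 1) * poch (x + 1) k :=
    fun k => by rw [poch_succ]; ring
  calc x * ∑ k ∈ range (s + 1), c k * poch (x + 1) k
      = ∑ k ∈ range (s + 1), c k * poch (x + 1) (k + 1) -
          ∑ k ∈ range (s + 1), ((k : ℝ) + 1) * c k * poch (x + 1) k := by
        rw [mul_sum, ← sum_sub_distrib]
        exact sum_congr rfl fun k _ => by linear_combination c k * hx k
    _ = _ := by
        rw [sum_range_succ, hc, zero_mul, add_zero, sum_range_succ', poch_zero]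
        simp only [sub_mul, sum_sub_distrib, Nat.cast_add, Nat.cast_one, Nat.cast_zero,
          add_assoc, one_add_one_eq_two]
        ring

lemma natCast_mul_shmaliy (N m n : ℕ) :
    (n : ℝ) * shmaliy m n N = shmaliyA N m * shmaliy (m + 1) n N + shmaliyB N m * shmaliy m n N +
      shmaliyC N m * shmaliy (m - 1) n N := by
  rw [shmaliy_eq_sum_coeff n N (le_refl (m + 1)), shmaliy_eq_sum_coeff n N (Nat.le_succ m),
    shmaliy_eq_sum_coeff n N (show m - 1 ≤ m + 1 by omega),
    mul_sum_mul_poch_add_one _ _ (shmaliyCoeff_eq_zero_of_lt N (Nat.lt_succ_self m)), mul_sum,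
    mul_sum, mul_sum, ← sum_add_distrib, ← sum_add_distrib, sum_range_succ' _ (m + 1),
    sub_eq_add_neg, Nat.cast_succ]
  congr 1
  · refine sum_congr rfl fun j _ => ?_
    rw [shmaliyCoeff_rec_succ N m j]
    ring
  · simp only [poch_zero, mul_one]
    exact shmaliyCoeff_rec_zero N m

noncomputable def shmaliyGram (N m q : ℕ) : ℝ :=
  ∑ n ∈ range N, shmaliyWeight N n * shmaliy m n N * shmaliy q n N

lemma shmaliyGram_comm (N m q : ℕ) : shmaliyGram N m q = shmaliyGram N q m :=
  sum_congr rfl fun _ _ => by ring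

lemma shmaliyGram_rec (N m q : ℕ) :
    shmaliyA N m * shmaliyGram N (m + 1) q + shmaliyB N m * shmaliyGram N m q +
        shmaliyC N m * shmaliyGram N (m - 1) q =
      shmaliyA N q * shmaliyGram N m (q + 1) + shmaliyB N q * shmaliyGram N m q +
        shmaliyC N q * shmaliyGram N m (q - 1) := by
  have key : ∀ a b, shmaliyA N a * shmaliyGram N (a + 1) b + shmaliyB N a * shmaliyGram N a b +
      shmaliyC N a * shmaliyGram N (a - 1) b =
        ∑ n ∈ range N, shmaliyWeight N n * ((n : ℝ) * shmaliy a n N) * shmaliy b n N := by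
    intro a b
    simp only [shmaliyGram, mul_sum, ← sum_add_distrib]
    exact sum_congr rfl fun n _ => by rw [natCast_mul_shmaliy N a n]; ring
  rw [key, shmaliyGram_comm N m (q + 1), shmaliyGram_comm N m q, shmaliyGram_comm N m (q - 1), key]
  exact sum_congr rfl fun _ _ => by ring

noncomputable def shmaliyNormSq (N m : ℕ) : ℝ :=
  (((m : ℝ) + 1) * Real.Gamma ((N : ℝ) - 1) * Real.Gamma (N : ℝ)) /
    (Real.Gamma ((N : ℝ) - m - 1) * (N : ℝ) * Real.Gamma ((N : ℝ) + m + 1))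

lemma shmaliyNormSq_zero {N : ℕ} (hN : 2 ≤ N) : shmaliyNormSq N 0 = 1 / N * (1 / N) := by
  have hN' : (2 : ℝ) ≤ N := by exact_mod_cast hN
  have h1 := Real.Gamma_pos_of_pos (show (0 : ℝ) < N - 1 by linarith)
  have h2 := Real.Gamma_pos_of_pos (show (0 : ℝ) < N by linarith)
  rw [shmaliyNormSq, Nat.cast_zero, zero_add, sub_zero, add_zero,
    Real.Gamma_add_one (by positivity)]
  field_simp

-- If `N - m - 2` is a non-positive integer both sides are `0`: `Real.Gamma` vanishes at its
-- poles and division by `0` gives `0`.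
lemma shmaliyA_mul_normSq_succ (N m : ℕ) :
    shmaliyA N m * shmaliyNormSq N (m + 1) = shmaliyC N (m + 1) * shmaliyNormSq N m := by
  set a : ℝ := (N : ℝ) - m - 2
  have hlow : (N : ℝ) - ((m + 1 : ℕ) : ℝ) - 1 = a := by push_cast; ring
  have hlow' : (N : ℝ) - m - 1 = a + 1 := by ring
  have hup : (N : ℝ) + ((m + 1 : ℕ) : ℝ) + 1 = ((N : ℝ) + m + 1) + 1 := by push_cast; ring
  have hΓ := Real.Gamma_pos_of_pos (show (0 : ℝ) < N + m + 1 by positivity)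
  simp only [shmaliyNormSq, shmaliyA, shmaliyC, hlow, hlow', hup, Nat.add_one_ne_zero, if_false,
    Real.Gamma_add_one (show (N : ℝ) + m + 1 ≠ 0 by positivity)]
  clear_value a
  rcases eq_or_ne a 0 with rfl | ha0
  · simp
  rw [Real.Gamma_add_one ha0]
  rcases eq_or_ne (Real.Gamma a) 0 with h0 | h0
  · simp [h0]
  push_cast
  field_simp
  ring

noncomputable def shmaliyDiag (N m q : ℕ) : ℝ := if m = q then shmaliyNormSq N m else 0

lemma shmaliyDiag_rec (N m q : ℕ) :
    shmaliyA N m * shmaliyDiag N (m + 1) q + shmaliyB N m * shmaliyDiag N m q +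
        shmaliyC N m * shmaliyDiag N (m - 1) q =
      shmaliyA N q * shmaliyDiag N m (q + 1) + shmaliyB N q * shmaliyDiag N m q +
        shmaliyC N q * shmaliyDiag N m (q - 1) := by
  unfold shmaliyDiag
  split_ifs <;> first | omega | skip
  · obtain rfl : q = m + 1 := by omega
    simp [shmaliyA_mul_normSq_succ]
  · obtain rfl : m = 0 := by omega
    obtain rfl : q = 0 := by omega
    simp [shmaliyC]
  · obtain rfl : q = m := by omega
    ring
  · obtain rfl : m = q + 1 := by omega
    simp [shmaliyA_mul_normSq_succ]
  · simp

theorem shmaliyGram_eq_diag {N : ℕ} (hN : 2 ≤ N) (m q : ℕ) :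
    shmaliyGram N m q = shmaliyDiag N m q := by
  induction m using Nat.strong_induction_on generalizing q with
  | _ m ih =>
    rcases m with _ | m
    · simp only [shmaliyGram, shmaliy_zero, shmaliyDiag, shmaliyNormSq_zero hN]
      have h := sum_shmaliyWeight_mul_shmaliy hN q
      simp only [mul_comm _ (1 / (N : ℝ)), mul_assoc, ← mul_sum] at h ⊢
      rw [h]
      rcases eq_or_ne q 0 with rfl | hq
      · simp
      · simp [hq, Ne.symm hq]
    · have h := shmaliyGram_rec N m q
      simp only [ih m (by omega), ih (m - 1) (by omega)] at h
      refine mul_left_cancel₀ (shmaliyA_ne_zero N m) ?_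
      linear_combination h - shmaliyDiag_rec N m q

theorem shmaliy_orthogonality_general (N m q : ℕ) (hN : 2 ≤ N) :
    ∑ n ∈ Finset.range N,
        (2 * (n : ℝ) / ((N : ℝ) * ((N : ℝ) - 1))) * shmaliy m n N * shmaliy q n N =
      (if m = q then (1 : ℝ) else 0) *
        (((m : ℝ) + 1) * Real.Gamma ((N : ℝ) - 1) * Real.Gamma (N : ℝ)) /
        (Real.Gamma ((N : ℝ) - m - 1) * (N : ℝ) * Real.Gamma ((N : ℝ) + m + 1)) := by
  rw [mul_div_assoc]
  refine (shmaliyGram_eq_diag hN m q).trans ?_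
  unfold shmaliyDiag shmaliyNormSq
  split_ifs <;> simp

theorem shmaliy_orthogonality (N m q : ℕ) (hN : 2 ≤ N)
    (hm : m ≤ N - 2) (hq : q ≤ N - 2) :
    ∑ n ∈ Finset.range N,
        (2 * (n : ℝ) / ((N : ℝ) * ((N : ℝ) - 1))) * shmaliy m n N * shmaliy q n N =
      (if m = q then (1 : ℝ) else 0) *
        (((m : ℝ) + 1) * Real.Gamma ((N : ℝ) - 1) * Real.Gamma (N : ℝ)) /
        (Real.Gamma ((N : ℝ) - m - 1) * (N : ℝ) * Real.Gamma ((N : ℝ) + m + 1)) :=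
  shmaliy_orthogonality_general N m q hN
end

section
/- Let n be a natural number and a, b, c, d real numbers such that all Pochhammer symbols (c)_k, (d)_k, (1−a−n)_k, (c+d−a−b)_k are nonzero for 0 ≤ k ≤ n. Then ∑_{k=0}^n [(−n)_k (a)_k (b)_k]/[(c)_k (d)_k k!] = [(a)_n (c+d−a−b)_n]/[(c)_n (d)_n] · ∑_{k=0}^n [(−n)_k (c−a)_k (d−a)_k]/[(1−a−n)_k (c+d−a−b)_k k!]. -/
/-!
Expanding `(y)_k / (v)_k` by the Chu–Vandermonde sum and interchanging the two summations gives
Sheppard's transformation of a terminating `₃F₂(1)`. Three applications of it, interleaved with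
permutations of the parameters, give the identity whenever `(c - a)_n ≠ 0`. Under the stated
hypotheses both sides are continuous in `c` near the given value, and `(c - a)_n` vanishes for only
finitely many `c`, so the extra condition is removed by continuity.
-/

open Finset Filter Topology Polynomial

lemma poch_add_s8 (z : ℝ) (i j : ℕ) : poch z (i + j) = poch z i * poch (z + i) j := by
  simp [poch, ← ascPochhammer_mul, eval_comp]

lemma poch_ne_zero_of_le {z : ℝ} {k n : ℕ} (h : poch z n ≠ 0) (hk : k ≤ n) : poch z k ≠ 0 := by
  obtain ⟨m, rfl⟩ := Nat.exists_eq_add_of_le hk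
  rw [poch_add_s8] at h
  exact left_ne_zero_of_mul h

lemma poch_eq_descPochhammer (z : ℝ) (m : ℕ) :
    poch z m = (descPochhammer ℝ m).eval (z + m - 1) := by
  rw [descPochhammer_eval_eq_ascPochhammer, poch]; ring_nf

lemma poch_neg (z : ℝ) (m : ℕ) : poch (-z) m = (-1) ^ m * (descPochhammer ℝ m).eval z :=
  ascPochhammer_eval_neg_eq_descPochhammer ℝ z m

lemma descPochhammer_eval_neg (z : ℝ) (m : ℕ) :
    (descPochhammer ℝ m).eval (-z) = (-1) ^ m * poch z m := by
  rw [← neg_neg z, poch_neg, neg_neg, ← mul_assoc, ← mul_pow]; norm_num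

lemma poch_one_sub_sub (z : ℝ) (m : ℕ) : poch (1 - z - m) m = (-1) ^ m * poch z m := by
  rw [show 1 - z - m = -(z + m - 1) by ring, poch_neg, poch_eq_descPochhammer]

lemma poch_neg_natCast (N m : ℕ) :
    poch (-(N : ℝ)) m = (-1) ^ m * m.factorial * N.choose m := by
  rw [poch_neg, descPochhammer_eval_eq_descFactorial, Nat.descFactorial_eq_factorial_mul_choose]
  push_cast; ring

lemma poch_neg_natCast_add_mul_factorial (j m : ℕ) :
    poch (-((j + m : ℕ) : ℝ)) j * m.factorial = (-1) ^ j * (j + m).factorial := by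
  rw [poch_neg_natCast, ← Nat.choose_mul_factorial_mul_factorial (Nat.le_add_right j m),
    Nat.add_sub_cancel_left]
  push_cast; ring

lemma poch_eq_mul_poch_one_sub_sub (s : ℝ) {j n : ℕ} (h : j ≤ n) :
    poch s n = (-1) ^ j * poch s (n - j) * poch (1 - s - n) j := by
  have hrefl : poch (s + (n - j : ℕ)) j = (-1) ^ j * poch (1 - s - n) j := by
    rw [← poch_one_sub_sub, Nat.cast_sub h]; ring_nf
  rw [mul_right_comm, ← hrefl, mul_comm, ← poch_add_s8, Nat.sub_add_cancel h]

lemma descPochhammer_smeval_eq_eval {R : Type*} [Ring R] (k : ℕ) (r : R) :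
    (descPochhammer ℤ k).smeval r = (descPochhammer R k).eval r := by
  rw [← descPochhammer_map (Int.castRingHom R), eval_map, ← aeval_eq_smeval, aeval_def,
    algebraMap_int_eq]

theorem sum_choose_mul_poch_mul_poch (k : ℕ) (x y : ℝ) :
    ∑ j ∈ range (k + 1), (-1) ^ j * k.choose j * poch x j * poch (y + j) (k - j) =
      poch (y - x) k := by
  -- Vandermonde for falling factorials: `(-1)^j (x)_j` is the falling factorial of `-x` at `j`,
  -- and `(y + j)_(k-j)` that of `y + k - 1` at `k - j`.
  have h := Ring.descPochhammer_smeval_add (r := -x) (s := y + k - 1) k (Commute.all _ _)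
  simp only [descPochhammer_smeval_eq_eval] at h
  rw [Nat.sum_antidiagonal_eq_sum_range_succ
    (fun i j => (k.choose i : ℝ) * ((descPochhammer ℝ i).eval (-x) *
      (descPochhammer ℝ j).eval (y + k - 1)))] at h
  rw [poch_eq_descPochhammer, show y - x + k - 1 = -x + (y + k - 1) by ring, h]
  refine sum_congr rfl fun j hj => ?_
  have hjk : j ≤ k := Nat.lt_succ_iff.mp (mem_range.mp hj)
  rw [descPochhammer_eval_neg, poch_eq_descPochhammer (y + j), Nat.cast_sub hjk]
  ring_nf

theorem sum_poch_neg_natCast_mul_poch_div (N : ℕ) (z w : ℝ) (hw : poch w N ≠ 0) :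
    ∑ m ∈ range (N + 1), poch (-(N : ℝ)) m * poch z m / (poch w m * m.factorial) =
      poch (w - z) N / poch w N := by
  rw [← sum_choose_mul_poch_mul_poch N z w, sum_div]
  refine sum_congr rfl fun m hm => ?_
  have hmN : m ≤ N := Nat.lt_succ_iff.mp (mem_range.mp hm)
  have hsplit : poch w N = poch w m * poch (w + m) (N - m) := by
    rw [← poch_add_s8, Nat.add_sub_cancel' hmN]
  rw [hsplit] at hw ⊢
  have hm : poch w m ≠ 0 := left_ne_zero_of_mul hw
  have hr : poch (w + m) (N - m) ≠ 0 := right_ne_zero_of_mul hw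
  rw [poch_neg_natCast]
  field_simp

/-- `₃F₂(-n, a, b; c, d; 1)`. -/
noncomputable def terminating3F2 (n : ℕ) (a b c d : ℝ) : ℝ :=
  ∑ k ∈ range (n + 1),
    poch (-(n : ℝ)) k * poch a k * poch b k / (poch c k * poch d k * (k.factorial : ℝ))

lemma terminating3F2_comm_upper (n : ℕ) (a b c d : ℝ) :
    terminating3F2 n a b c d = terminating3F2 n b a c d := by
  unfold terminating3F2
  exact sum_congr rfl fun k _ => by ring

lemma terminating3F2_comm_lower (n : ℕ) (a b c d : ℝ) :
    terminating3F2 n a b c d = terminating3F2 n a b d c := by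
  unfold terminating3F2
  exact sum_congr rfl fun k _ => by ring

lemma sum_Ico_poch_neg_natCast_mul_poch_div {n j : ℕ} (hj : j ≤ n) (x u : ℝ)
    (hu : poch u n ≠ 0) :
    ∑ k ∈ Ico j (n + 1), poch (-(n : ℝ)) k * poch x k / (poch u k * k.factorial) *
        poch (-(k : ℝ)) j =
      (-1) ^ j * poch (-(n : ℝ)) j * poch x j * poch (u - x) (n - j) / poch u n := by
  have hsplit : poch u n = poch u j * poch (u + j) (n - j) := by
    rw [← poch_add_s8, Nat.add_sub_cancel' hj]
  have huj : poch u j ≠ 0 := poch_ne_zero_of_le hu hj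
  have hterm : ∀ m ∈ range (n - j + 1),
      poch (-(n : ℝ)) (j + m) * poch x (j + m) / (poch u (j + m) * (j + m).factorial) *
          poch (-((j + m : ℕ) : ℝ)) j =
        (-1) ^ j * poch (-(n : ℝ)) j * poch x j / poch u j *
          (poch (-((n - j : ℕ) : ℝ)) m * poch (x + j) m / (poch (u + j) m * m.factorial)) := by
    intro m hm
    have hujm : poch (u + j) m ≠ 0 := by
      refine right_ne_zero_of_mul (a := poch u j) ?_
      rw [← poch_add_s8]
      exact poch_ne_zero_of_le hu (by have := mem_range.mp hm; omega)
    have hn : -(n : ℝ) + j = -((n - j : ℕ) : ℝ) := by rw [Nat.cast_sub hj]; ring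
    have key := poch_neg_natCast_add_mul_factorial j m
    rw [poch_add_s8, poch_add_s8 x, poch_add_s8 u, hn]
    field_simp
    linear_combination
      poch (-(n : ℝ)) j * poch (-((n - j : ℕ) : ℝ)) m * poch x j * poch (x + j) m * key
  rw [sum_Ico_eq_sum_range, show n + 1 - j = n - j + 1 by omega, sum_congr rfl hterm,
    ← mul_sum, sum_poch_neg_natCast_mul_poch_div, add_sub_add_right_eq_sub, hsplit]
  · field_simp
  · exact right_ne_zero_of_mul (hsplit ▸ hu)

theorem terminating3F2_sheppard (n : ℕ) (x y u v : ℝ) (hu : poch u n ≠ 0)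
    (hv : poch v n ≠ 0) (hw : poch (1 + x - u - n) n ≠ 0) :
    terminating3F2 n x y u v =
      poch (u - x) n / poch u n * terminating3F2 n x (v - y) v (1 + x - u - n) := by
  set f : ℕ → ℕ → ℝ := fun k j =>
    poch (-(n : ℝ)) k * poch x k / (poch u k * k.factorial) * poch (-(k : ℝ)) j *
      (poch (v - y) j / (poch v j * j.factorial))
  have hexpand : ∀ k ∈ range (n + 1),
      poch (-(n : ℝ)) k * poch x k * poch y k / (poch u k * poch v k * k.factorial) =
        ∑ j ∈ range (k + 1), f k j := by
    intro k hk
    have hkn : k ≤ n := Nat.lt_succ_iff.mp (mem_range.mp hk)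
    have hvy := sum_poch_neg_natCast_mul_poch_div k (v - y) v (poch_ne_zero_of_le hv hkn)
    rw [sub_sub_cancel] at hvy
    have : poch (-(n : ℝ)) k * poch x k * poch y k / (poch u k * poch v k * k.factorial) =
        poch (-(n : ℝ)) k * poch x k / (poch u k * k.factorial) * (poch y k / poch v k) := by
      ring
    rw [this, ← hvy, mul_sum]
    exact sum_congr rfl fun j _ => by ring
  have hinner : ∀ j ∈ range (n + 1), ∑ k ∈ Ico j (n + 1), f k j =
      poch (u - x) n / poch u n *
        (poch (-(n : ℝ)) j * poch x j * poch (v - y) j /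
          (poch v j * poch (1 + x - u - n) j * j.factorial)) := by
    intro j hj
    have hjn : j ≤ n := Nat.lt_succ_iff.mp (mem_range.mp hj)
    have hrefl := poch_eq_mul_poch_one_sub_sub (u - x) hjn
    rw [show 1 - (u - x) - n = 1 + x - u - n by ring] at hrefl
    have hwj : poch (1 + x - u - n) j ≠ 0 := poch_ne_zero_of_le hw hjn
    have hvj : poch v j ≠ 0 := poch_ne_zero_of_le hv hjn
    rw [← sum_mul, sum_Ico_poch_neg_natCast_mul_poch_div hjn x u hu, hrefl]
    field_simp
  unfold terminating3F2
  rw [sum_congr rfl hexpand, sum_comm' (t' := range (n + 1)) (s' := fun j => Ico j (n + 1)),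
    sum_congr rfl hinner, mul_sum]
  intro k j
  simp only [mem_range, mem_Ico]
  omega

theorem terminating3F2_thomae_of_poch_sub_ne_zero (n : ℕ) (a b c d : ℝ) (hc : poch c n ≠ 0)
    (hd : poch d n ≠ 0) (ha : poch (1 - a - n) n ≠ 0) (hcdab : poch (c + d - a - b) n ≠ 0)
    (hca : poch (c - a) n ≠ 0) :
    terminating3F2 n a b c d =
      poch a n * poch (c + d - a - b) n / (poch c n * poch d n) *
        terminating3F2 n (c - a) (d - a) (1 - a - n) (c + d - a - b) := by
  have hsign : ((-1 : ℝ) ^ n) ≠ 0 := pow_ne_zero _ (by norm_num)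
  have hrefl : poch (1 + a - c - n) n = (-1) ^ n * poch (c - a) n := by
    rw [← poch_one_sub_sub]; ring_nf
  have hw : poch (1 + a - c - n) n ≠ 0 := by rw [hrefl]; exact mul_ne_zero hsign hca
  have hA := terminating3F2_sheppard n a b c d hc hd hw
  have hB := terminating3F2_sheppard n (d - b) a (1 + a - c - n) d hw hd
    (by convert hcdab using 2; ring)
  have hC := terminating3F2_sheppard n (d - a) (d - b) d (c + d - a - b) hd hcdab
    (by convert ha using 2; ring)
  rw [show 1 + (d - b) - (1 + a - c - n) - n = c + d - a - b by ring,
    show 1 + a - c - n - (d - b) = 1 - (c + d - a - b) - n by ring, poch_one_sub_sub] at hB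
  rw [show c + d - a - b - (d - b) = c - a by ring, show 1 + (d - a) - d - n = 1 - a - n by ring,
    sub_sub_cancel] at hC
  rw [hA, terminating3F2_comm_upper n a, terminating3F2_comm_lower n (d - b), hB,
    terminating3F2_comm_upper n (d - b), hC, terminating3F2_comm_upper n (d - a),
    terminating3F2_comm_lower n (c - a), hrefl]
  field_simp

@[fun_prop]
lemma continuous_poch (k : ℕ) : Continuous fun z => poch z k :=
  (ascPochhammer ℝ k).continuous

lemma continuousAt_terminating3F2 {n : ℕ} {x y u v : ℝ → ℝ} {t : ℝ} (hx : ContinuousAt x t)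
    (hy : ContinuousAt y t) (hu : ContinuousAt u t) (hv : ContinuousAt v t)
    (hu0 : poch (u t) n ≠ 0) (hv0 : poch (v t) n ≠ 0) :
    ContinuousAt (fun s => terminating3F2 n (x s) (y s) (u s) (v s)) t := by
  unfold terminating3F2
  refine tendsto_finsetSum _ fun k hk => ContinuousAt.div (by fun_prop) (by fun_prop) ?_
  have hkn : k ≤ n := Nat.lt_succ_iff.mp (mem_range.mp hk)
  exact mul_ne_zero (mul_ne_zero (poch_ne_zero_of_le hu0 hkn) (poch_ne_zero_of_le hv0 hkn))
    (Nat.cast_ne_zero.mpr k.factorial_ne_zero)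

lemma eventually_poch_sub_ne_zero (n : ℕ) (a z : ℝ) : ∀ᶠ w in 𝓝[≠] z, poch (w - a) n ≠ 0 := by
  have hfin : ((fun k : ℕ => a - k) '' Set.Iio n).Finite := (Set.finite_Iio n).image _
  have := hfin.to_subtype
  filter_upwards [nhdsNE_of_nhdsNE_sdiff_finite self_mem_nhdsWithin this] with w hw h0
  rw [poch, ascPochhammer_eval_eq_zero_iff] at h0
  obtain ⟨k, hk, hkw⟩ := h0
  exact hw.2 ⟨k, hk, by linarith⟩

theorem thomae_A2 (n : ℕ) (a b c d : ℝ)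
    (hc : ∀ k ≤ n, poch c k ≠ 0) (hd : ∀ k ≤ n, poch d k ≠ 0)
    (h1 : ∀ k ≤ n, poch (1 - a - n) k ≠ 0)
    (h2 : ∀ k ≤ n, poch (c + d - a - b) k ≠ 0) :
    ∑ k ∈ Finset.range (n + 1),
        (poch (-(n : ℝ)) k * poch a k * poch b k) /
          (poch c k * poch d k * (k.factorial : ℝ)) =
      (poch a n * poch (c + d - a - b) n) / (poch c n * poch d n) *
        ∑ k ∈ Finset.range (n + 1),
          (poch (-(n : ℝ)) k * poch (c - a) k * poch (d - a) k) /
            (poch (1 - a - n) k * poch (c + d - a - b) k * (k.factorial : ℝ)) := by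
  set G : ℝ → ℝ := fun c' => poch a n * poch (c' + d - a - b) n / (poch c' n * poch d n) *
    terminating3F2 n (c' - a) (d - a) (1 - a - n) (c' + d - a - b)
  change terminating3F2 n a b c d = G c
  have hF : ContinuousAt (fun c' => terminating3F2 n a b c' d) c := by
    refine continuousAt_terminating3F2 ?_ ?_ ?_ ?_ (hc n le_rfl) (hd n le_rfl) <;> fun_prop
  have hG : ContinuousAt G c := by
    have hprefactor : ContinuousAt
        (fun c' => poch a n * poch (c' + d - a - b) n / (poch c' n * poch d n)) c :=
      ContinuousAt.div (by fun_prop) (by fun_prop) (mul_ne_zero (hc n le_rfl) (hd n le_rfl))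
    have hseries : ContinuousAt
        (fun c' => terminating3F2 n (c' - a) (d - a) (1 - a - n) (c' + d - a - b)) c := by
      refine continuousAt_terminating3F2 ?_ ?_ ?_ ?_ (h1 n le_rfl) (h2 n le_rfl) <;> fun_prop
    exact hprefactor.mul hseries
  have hFG : (fun c' => terminating3F2 n a b c' d) =ᶠ[𝓝[≠] c] G := by
    have hc' : ∀ᶠ c' in 𝓝 c, poch c' n ≠ 0 :=
      (continuous_poch n).continuousAt.eventually_ne (hc n le_rfl)
    have hcdab' : ∀ᶠ c' in 𝓝 c, poch (c' + d - a - b) n ≠ 0 :=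
      ((continuous_poch n).comp (by fun_prop)).continuousAt.eventually_ne (h2 n le_rfl)
    filter_upwards [nhdsWithin_le_nhds hc', nhdsWithin_le_nhds hcdab',
      eventually_poch_sub_ne_zero n a c] with c' hc'' hcdab'' hca
    exact terminating3F2_thomae_of_poch_sub_ne_zero n a b c' d hc'' (hd n le_rfl) (h1 n le_rfl)
      hcdab'' hca
  exact ((hF.eventuallyEq_nhds_iff_eventuallyEq_nhdsNE hG).1 hFG).eq_of_nhds
end
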